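/- Let k ≥ 1 and let [a_i, b_i] for i = 1,…,k be subintervals of [0, m] each of length at least 1, and let Z be the set of linear orders on {1,…,k} realizable by picking distinct z_i ∈ [a_i, b_i]. Then ∑_{i=1}^k log₂(b_i − a_i) ≤ log₂ |Z| + k · log₂(e·m/k). -/

import Mathlib

/-!
Up to the null set of tuples with a repeated coordinate, the box `∏ i, [a i, b i]` is covered by
the cells `{z | z ∘ σ⁻¹ strictly increasing}` of the realizable orders `σ`. Permuting coordinates
shows that these `k!` cells cut the cube `[0, m]^k` into pieces of equal volume, at most
`m^k / k!` each, so `∏ i, (b i - a i) ≤ |Z| m^k / k!`. Taking `log₂` and using `k! ≥ (k / e)^k`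
gives the bound.
-/

open MeasureTheory Set
open scoped Nat ENNReal

lemma volume_setOf_apply_eq_apply {ι : Type*} [Fintype ι] {i j : ι} (hij : i ≠ j) :
    volume {x : ι → ℝ | x i = x j} = 0 := by
  classical
  let f : (ι → ℝ) →ₗ[ℝ] ℝ := (LinearMap.proj i : (ι → ℝ) →ₗ[ℝ] ℝ) - LinearMap.proj j
  have hf : {x : ι → ℝ | x i = x j} = LinearMap.ker f := by
    ext x; simp [f, sub_eq_zero]
  refine hf ▸ Measure.addHaar_submodule _ _ fun htop => ?_
  have : f (Pi.single i 1) = 1 := by simp [f, hij.symm]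
  simp [LinearMap.ker_eq_top.1 htop] at this

lemma volume_setOf_not_injective {ι : Type*} [Fintype ι] :
    volume {x : ι → ℝ | ¬ Function.Injective x} = 0 := by
  have : {x : ι → ℝ | ¬ Function.Injective x} = ⋃ (i) (j) (_ : i ≠ j), {x | x i = x j} := by
    ext x; simp [Function.Injective, and_comm]
  rw [this]
  exact measure_iUnion_null fun i => measure_iUnion_null fun j => measure_iUnion_null
    volume_setOf_apply_eq_apply

section OrderCell

variable {k : ℕ}

def orderCell (σ : Equiv.Perm (Fin k)) : Set (Fin k → ℝ) :=
  {x | StrictMono (x ∘ ⇑σ⁻¹)}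

variable {σ τ : Equiv.Perm (Fin k)} {x : Fin k → ℝ}

lemma mem_orderCell_iff : x ∈ orderCell σ ↔ ∀ i j, σ i < σ j ↔ x i < x j := by
  refine ⟨fun h i j => ?_, fun h i j hij => (h _ _).1 (by simpa using hij)⟩
  simpa using (h.lt_iff_lt (a := σ i) (b := σ j)).symm

lemma injective_of_mem_orderCell (h : x ∈ orderCell σ) : Function.Injective x := by
  simpa [Function.comp_assoc] using h.injective.comp σ.injective

lemma eq_of_mem_orderCell (hσ : x ∈ orderCell σ) (hτ : x ∈ orderCell τ) : σ = τ := by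
  have h := Tuple.unique_monotone hσ.monotone hτ.monotone
  exact inv_injective <| DFunLike.coe_injective ((injective_of_mem_orderCell hσ).comp_left h)

lemma exists_mem_orderCell (hx : Function.Injective x) : ∃ σ, x ∈ orderCell σ :=
  ⟨(Tuple.sort x)⁻¹, by
    simpa [orderCell] using (Tuple.monotone_sort x).strictMono_of_injective
      (hx.comp (Tuple.sort x).injective)⟩

lemma measurableSet_orderCell (σ : Equiv.Perm (Fin k)) : MeasurableSet (orderCell σ) := by
  have : orderCell σ = ⋂ (i) (j) (_ : i < j), {x : Fin k → ℝ | x (σ⁻¹ i) < x (σ⁻¹ j)} := by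
    ext x; simp [orderCell, StrictMono]
  rw [this]
  exact .iInter fun i => .iInter fun j => .iInter fun _ =>
    measurableSet_lt (measurable_pi_apply _) (measurable_pi_apply _)

lemma orderCell_inter_pi_nonempty_iff {t : Fin k → Set ℝ} :
    (orderCell σ ∩ univ.pi t).Nonempty ↔
      ∃ z : Fin k → ℝ, (∀ i, z i ∈ t i) ∧ Function.Injective z ∧ ∀ i j, σ i < σ j ↔ z i < z j :=
  ⟨fun ⟨z, hσ, hz⟩ => ⟨z, fun i => hz i trivial, injective_of_mem_orderCell hσ,
      mem_orderCell_iff.1 hσ⟩,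
    fun ⟨z, hz, _, hσ⟩ => ⟨z, mem_orderCell_iff.2 hσ, fun i _ => hz i⟩⟩

lemma volume_orderCell_inter_pi (σ : Equiv.Perm (Fin k)) (t : Set ℝ) :
    volume (orderCell σ ∩ univ.pi fun _ => t) =
      volume (orderCell (1 : Equiv.Perm (Fin k)) ∩ univ.pi fun _ => t) := by
  let T := MeasurableEquiv.piCongrLeft (fun _ : Fin k => ℝ) σ
  have hT : ∀ x, T x = x ∘ ⇑σ⁻¹ := fun x => by
    ext i; simpa using MeasurableEquiv.piCongrLeft_apply_apply (β := fun _ => ℝ) σ x (σ.symm i)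
  have hpre : T ⁻¹' (orderCell 1 ∩ univ.pi fun _ => t) = orderCell σ ∩ univ.pi fun _ => t := by
    ext x
    simp [hT, orderCell, Equiv.Perm.inv_def, σ.symm.forall_congr_right (q := fun i => x i ∈ t)]
  rw [← hpre]
  exact (volume_measurePreserving_piCongrLeft (fun _ : Fin k => ℝ) σ).measure_preimage_equiv _

lemma factorial_mul_volume_orderCell_one_inter_pi_le {t : Set ℝ} (ht : MeasurableSet t) :
    (k ! : ℝ≥0∞) * volume (orderCell (1 : Equiv.Perm (Fin k)) ∩ univ.pi fun _ => t) ≤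
      volume t ^ k := by
  have hdisj : Pairwise (Function.onFun Disjoint
      fun σ : Equiv.Perm (Fin k) => orderCell σ ∩ univ.pi fun _ => t) :=
    fun σ τ hne => disjoint_left.2 fun x hσ hτ => hne (eq_of_mem_orderCell hσ.1 hτ.1)
  calc (k ! : ℝ≥0∞) * volume (orderCell (1 : Equiv.Perm (Fin k)) ∩ univ.pi fun _ => t)
      = ∑ σ : Equiv.Perm (Fin k), volume (orderCell σ ∩ univ.pi fun _ => t) := by
        simp [volume_orderCell_inter_pi, Fintype.card_perm]
    _ = volume (⋃ σ : Equiv.Perm (Fin k), orderCell σ ∩ univ.pi fun _ => t) := by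
        rw [measure_iUnion hdisj fun σ => (measurableSet_orderCell σ).inter (.univ_pi fun _ => ht),
          tsum_fintype]
    _ ≤ volume (univ.pi fun _ : Fin k => t) :=
        measure_mono (iUnion_subset fun _ => inter_subset_right)
    _ = volume t ^ k := by simp [volume_pi_pi]

theorem factorial_mul_volume_le {s : Set (Fin k → ℝ)} {t : Set ℝ} (ht : MeasurableSet t)
    (hst : s ⊆ univ.pi fun _ => t) :
    (k ! : ℝ≥0∞) * volume s ≤ Nat.card {σ // (orderCell σ ∩ s).Nonempty} * volume t ^ k := by
  classical
  have hcover : s \ {x | ¬ Function.Injective x} ⊆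
      ⋃ σ : {σ // (orderCell σ ∩ s).Nonempty}, orderCell σ.1 ∩ univ.pi fun _ => t := by
    rintro x ⟨hxs, hx⟩
    obtain ⟨σ, hσ⟩ := exists_mem_orderCell (not_not.1 hx)
    exact mem_iUnion.2 ⟨⟨σ, x, hσ, hxs⟩, hσ, hst hxs⟩
  calc (k ! : ℝ≥0∞) * volume s
      = k ! * volume (s \ {x | ¬ Function.Injective x}) := by
        rw [measure_sdiff_null volume_setOf_not_injective]
    _ ≤ k ! * ∑ σ : {σ // (orderCell σ ∩ s).Nonempty},
          volume (orderCell σ.1 ∩ univ.pi fun _ => t) := by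
        gcongr; exact (measure_mono hcover).trans (measure_iUnion_fintype_le _ _)
    _ = Nat.card {σ // (orderCell σ ∩ s).Nonempty} *
          (k ! * volume (orderCell (1 : Equiv.Perm (Fin k)) ∩ univ.pi fun _ => t)) := by
        simp only [volume_orderCell_inter_pi, Finset.sum_const, Finset.card_univ, nsmul_eq_mul,
          Nat.card_eq_fintype_card]
        ring
    _ ≤ Nat.card {σ // (orderCell σ ∩ s).Nonempty} * volume t ^ k := by
        gcongr; exact factorial_mul_volume_orderCell_one_inter_pi_le ht

end OrderCell

lemma factorial_mul_prod_sub_le_card_mul_pow {k : ℕ} {a b : Fin k → ℝ} {m : ℝ} (hm : 0 ≤ m)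
    (ha : ∀ i, 0 ≤ a i) (hb : ∀ i, b i ≤ m) (hab : ∀ i, a i ≤ b i) :
    (k ! : ℝ) * ∏ i, (b i - a i) ≤
      Nat.card {σ : Equiv.Perm (Fin k) // ∃ z : Fin k → ℝ, (∀ i, z i ∈ Icc (a i) (b i)) ∧
        Function.Injective z ∧ (∀ i j, σ i < σ j ↔ z i < z j)} * m ^ k := by
  have hvol := factorial_mul_volume_le (measurableSet_Icc (a := (0 : ℝ)) (b := m))
    (pi_mono fun i _ => Icc_subset_Icc (ha i) (hb i))
  simp_rw [orderCell_inter_pi_nonempty_iff] at hvol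
  rw [← ENNReal.ofReal_le_ofReal_iff (by positivity)]
  simpa [Real.volume_Icc_pi, volume_pi_pi, ENNReal.ofReal_mul, ENNReal.ofReal_prod_of_nonneg,
    ENNReal.ofReal_pow hm, sub_nonneg.2 (hab _)] using hvol

lemma pow_div_factorial_le_exp_one_mul_div_pow {k : ℕ} (hk : 0 < k) {m : ℝ} (hm : 0 ≤ m) :
    m ^ k / k ! ≤ (Real.exp 1 * m / k) ^ k := by
  have h := Real.pow_div_factorial_le_exp (x := (k : ℝ)) k.cast_nonneg k
  rw [← Real.exp_one_pow, div_le_iff₀ (by positivity)] at h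
  rw [div_pow, mul_pow, div_le_div_iff₀ (by positivity) (by positivity)]
  calc m ^ k * (k : ℝ) ^ k ≤ m ^ k * (Real.exp 1 ^ k * k !) := by gcongr
    _ = Real.exp 1 ^ k * m ^ k * k ! := by ring

lemma logb_le_of_factorial_mul_le_mul_pow {k : ℕ} (hk : 0 < k) {P N m : ℝ} (hP : 0 < P)
    (hm : 0 < m) (h : k ! * P ≤ N * m ^ k) :
    Real.logb 2 P ≤ Real.logb 2 N + k * Real.logb 2 (Real.exp 1 * m / k) := by
  have hN : 0 < N := pos_of_mul_pos_left ((by positivity : (0 : ℝ) < k ! * P).trans_le h)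
    (by positivity)
  rw [← Real.logb_pow, ← Real.logb_mul hN.ne' (by positivity)]
  refine Real.logb_le_logb_of_le one_lt_two hP ?_
  calc P ≤ N * (m ^ k / k !) := by
        rw [mul_div_assoc', le_div_iff₀ (by positivity)]; linarith
    _ ≤ N * (Real.exp 1 * m / k) ^ k := by
        gcongr; exact pow_div_factorial_le_exp_one_mul_div_pow hk hm.le

theorem stmt_1 (k : ℕ) (hk : 1 ≤ k) (m : ℝ) (a b : Fin k → ℝ)
    (ha : ∀ i, 0 ≤ a i) (hb : ∀ i, b i ≤ m) (hlen : ∀ i, 1 ≤ b i - a i) :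
    ∑ i, Real.logb 2 (b i - a i) ≤
      Real.logb 2 (Nat.card {σ : Equiv.Perm (Fin k) //
        ∃ z : Fin k → ℝ, (∀ i, z i ∈ Set.Icc (a i) (b i)) ∧
          Function.Injective z ∧ (∀ i j, σ i < σ j ↔ z i < z j)}) +
      k * Real.logb 2 (Real.exp 1 * m / k) := by
  have hlen₀ : ∀ i, 0 < b i - a i := fun i => by linarith [hlen i]
  have hm : 0 < m := by
    let i₀ : Fin k := ⟨0, hk⟩
    linarith [ha i₀, hb i₀, hlen i₀]
  rw [← Real.logb_prod _ _ fun i _ => (hlen₀ i).ne']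
  exact logb_le_of_factorial_mul_le_mul_pow hk (Finset.prod_pos fun i _ => hlen₀ i) hm
    (factorial_mul_prod_sub_le_card_mul_pow hm.le ha hb fun i => sub_nonneg.1 (hlen₀ i).le)
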